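/- Log-convexity of the Ornstein–Uhlenbeck semigroup P_t with covariance Q: for every Borel function g : ℝⁿ → [0, ∞], every t > 0, every x₀, x₁ ∈ ℝⁿ and every s ∈ [0,1], one has P_t g((1−s)x₀ + s x₁) ≤ exp( s(1−s) |x₁ − x₀|² / (2t) ) · (P_t g(x₀))^{1−s} · (P_t g(x₁))^{s}, the inequality being understood in [0, ∞]. -/

import Mathlib

open MeasureTheory Real ENNReal

/-- The centered Gaussian measure on `EuclideanSpace ℝ (Fin n)` with (positive-definite)
covariance matrix `S`, defined through its density with respect to Lebesgue measure. -/
noncomputable def gaussianCov {n : ℕ} (S : Matrix (Fin n) (Fin n) ℝ) :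
    Measure (EuclideanSpace ℝ (Fin n)) :=
  MeasureTheory.volume.withDensity fun x =>
    ENNReal.ofReal (((2 * Real.pi) ^ (n : ℝ) * S.det) ^ (-(1 / 2 : ℝ))
      * Real.exp (-(inner ℝ x (Matrix.toEuclideanLin S⁻¹ x) : ℝ) / 2))

/-- The Ornstein–Uhlenbeck semigroup with covariance `Q` applied to a `[0,∞]`-valued function:
with `A := −Q⁻¹/2` and `Q_t := Q(I − exp(2tA))`,
`P_t g (x) = ∫ g(exp(tA) x + y) dN(0,Q_t)(y)`. -/
noncomputable def ouSemigroup {n : ℕ} (Q : Matrix (Fin n) (Fin n) ℝ) (t : ℝ)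
    (g : EuclideanSpace ℝ (Fin n) → ℝ≥0∞) (x : EuclideanSpace ℝ (Fin n)) : ℝ≥0∞ :=
  ∫⁻ y, g (Matrix.toEuclideanLin (NormedSpace.exp (t • (-(2 : ℝ)⁻¹ • Q⁻¹))) x + y)
    ∂(gaussianCov (Q * (1 - NormedSpace.exp ((2 * t) • (-(2 : ℝ)⁻¹ • Q⁻¹)))))

/-!
Write `P = exp(tA)` and `φ` for the density of `N(0, Q_t)`, so that
`P_t g(x) = ∫ φ(z - P x) g(z) dz`. For a centered Gaussian density one has the exact identity
`φ((1-s)a + s b) = exp(s(1-s)⟪a - b, Q_t⁻¹(a - b)⟫/2) φ(a)^(1-s) φ(b)^s`; applied with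
`a = z - P x₀`, `b = z - P x₁` and followed by Hölder's inequality for the measure `g dz`, it
reduces the claim to `⟪P v, Q_t⁻¹ P v⟫ ≤ ‖v‖²/t`. Since everything is a function of `Q⁻¹`,
`Q_t = P M P` with `M = exp(tQ⁻¹) Q - Q`, so `P Q_t⁻¹ P = M⁻¹`; and `M ≥ t` because in the
exponential series `M = Σ_{k ≥ 1} t^k Q^{1-k} / k!` every term is positive semidefinite and the
first one is `t`. Then `⟪v, M⁻¹ v⟫ ≤ ‖v‖²/t` by Cauchy–Schwarz.
-/

open Matrix
open scoped RealInnerProductSpace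

section InnerProductSpace

variable {E : Type*} [NormedAddCommGroup E] [InnerProductSpace ℝ E]

theorem real_inner_le_norm_sq_div_of_mul_norm_sq_le {t : ℝ} (ht : 0 < t) {w u : E}
    (h : t * ‖w‖ ^ 2 ≤ ⟪w, u⟫) : ⟪w, u⟫ ≤ ‖u‖ ^ 2 / t := by
  have hcs := real_inner_le_norm w u
  rw [le_div_iff₀ ht]
  nlinarith [mul_le_mul_of_nonneg_left hcs ht.le, mul_le_mul_of_nonneg_left (h.trans hcs) ht.le,
    sq_nonneg (t * ‖w‖ - ‖u‖)]

theorem real_inner_convexComb_map_self (T : E →ₗ[ℝ] E) (a b : E) (s : ℝ) :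
    ⟪(1 - s) • a + s • b, T ((1 - s) • a + s • b)⟫
      = (1 - s) * ⟪a, T a⟫ + s * ⟪b, T b⟫ - s * (1 - s) * ⟪a - b, T (a - b)⟫ := by
  simp only [map_add, map_smul, map_sub, inner_add_left, inner_add_right, inner_sub_left,
    inner_sub_right, real_inner_smul_left, real_inner_smul_right]
  ring

end InnerProductSpace

theorem ContinuousLinearMap.map_one_add_map_le_map_exp {𝔸 : Type*} [NormedRing 𝔸]
    [NormedAlgebra ℝ 𝔸] [CompleteSpace 𝔸] (L : 𝔸 →L[ℝ] ℝ) {x : 𝔸}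
    (hL : ∀ k : ℕ, 0 ≤ L (x ^ k)) : L 1 + L x ≤ L (NormedSpace.exp x) := by
  have hsum := (NormedSpace.exp_series_hasSum_exp' (𝕂 := ℝ) x).mapL L
  have := sum_le_hasSum {0, 1} (fun k _ => ?_) hsum
  · simpa using this
  · simp only [map_smul, smul_eq_mul]
    exact mul_nonneg (by positivity) (hL k)

theorem MeasureTheory.lintegral_le_mul_rpow_mul_rpow {α : Type*} [MeasurableSpace α]
    {μ : Measure α} {f g h : α → ℝ≥0∞} (hf : AEMeasurable f μ) (hg : AEMeasurable g μ)
    {s : ℝ} (hs0 : 0 ≤ s) (hs1 : s ≤ 1) {c : ℝ≥0∞}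
    (hh : ∀ᵐ x ∂μ, h x ≤ c * f x ^ (1 - s) * g x ^ s) :
    ∫⁻ x, h x ∂μ ≤ c * (∫⁻ x, f x ∂μ) ^ (1 - s) * (∫⁻ x, g x ∂μ) ^ s := by
  calc ∫⁻ x, h x ∂μ ≤ ∫⁻ x, c * (f x ^ (1 - s) * g x ^ s) ∂μ :=
        lintegral_mono_ae (hh.mono fun x hx => by rwa [← mul_assoc])
    _ = c * ∫⁻ x, f x ^ (1 - s) * g x ^ s ∂μ :=
        lintegral_const_mul'' _ ((hf.pow_const _).mul (hg.pow_const _))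
    _ ≤ c * ((∫⁻ x, f x ∂μ) ^ (1 - s) * (∫⁻ x, g x ∂μ) ^ s) := by
        gcongr
        exact ENNReal.lintegral_mul_norm_pow_le hf hg (by linarith) hs0 (by ring)
    _ = c * (∫⁻ x, f x ∂μ) ^ (1 - s) * (∫⁻ x, g x ∂μ) ^ s := (mul_assoc _ _ _).symm

section Matrix

variable {ι : Type*} [Fintype ι] [DecidableEq ι]

theorem Matrix.exp_smul_mul_exp_smul (A : Matrix ι ι ℝ) (a b : ℝ) :
    NormedSpace.exp (a • A) * NormedSpace.exp (b • A) = NormedSpace.exp ((a + b) • A) := by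
  rw [← exp_add_of_commute _ _ (((Commute.refl A).smul_left a).smul_right b), add_smul]

theorem Matrix.commute_self_nonsing_inv (A : Matrix ι ι ℝ) : Commute A A⁻¹ := by
  by_cases h : IsUnit A.det
  · exact (mul_nonsing_inv A h).trans (nonsing_inv_mul A h).symm
  · rw [nonsing_inv_apply_not_isUnit A h]
    exact Commute.zero_right A

theorem Matrix.PosDef.mul_norm_sq_le_inner_exp_smul_inv_mul_sub {Q : Matrix ι ι ℝ}
    (hQ : Q.PosDef) {t : ℝ} (ht : 0 ≤ t) (w : EuclideanSpace ℝ ι) :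
    t * ‖w‖ ^ 2 ≤ ⟪w, toEuclideanLin (NormedSpace.exp (t • Q⁻¹) * Q - Q) w⟫ := by
  let : NormedRing (Matrix ι ι ℝ) := Matrix.linftyOpNormedRing
  let : NormedAlgebra ℝ (Matrix ι ι ℝ) := Matrix.linftyOpNormedAlgebra
  have hQQ : Q⁻¹ * Q = 1 := nonsing_inv_mul Q ((isUnit_iff_isUnit_det Q).mp hQ.isUnit)
  let L : Matrix ι ι ℝ →L[ℝ] ℝ := LinearMap.toContinuousLinearMap
    ((innerₛₗ ℝ w).comp ((LinearMap.applyₗ w).comp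
      ((toEuclideanLin : Matrix ι ι ℝ ≃ₗ[ℝ] _).toLinearMap.comp (LinearMap.mulRight ℝ Q))))
  have hL : ∀ N, L N = ⟪w, toEuclideanLin (N * Q) w⟫ := fun N => rfl
  have hpow : ∀ k : ℕ, 0 ≤ L ((t • Q⁻¹) ^ k) := by
    intro k
    have hpsd : (Q⁻¹ ^ k * Q).PosSemidef := by
      cases k with
      | zero => simpa using hQ.posSemidef
      | succ k => rw [pow_succ, mul_assoc, hQQ, mul_one]; exact hQ.inv.posSemidef.pow k
    rw [hL, smul_pow, smul_mul_assoc, map_smul, LinearMap.smul_apply, inner_smul_right]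
    exact mul_nonneg (pow_nonneg ht k)
      ((isPositive_toEuclideanLin_iff.mpr hpsd).inner_nonneg_right w)
  have : ⟪w, toEuclideanLin (1 * Q) w⟫ + ⟪w, toEuclideanLin (t • Q⁻¹ * Q) w⟫
      ≤ ⟪w, toEuclideanLin (NormedSpace.exp (t • Q⁻¹) * Q) w⟫ :=
    L.map_one_add_map_le_map_exp hpow
  rw [one_mul, smul_mul_assoc, hQQ, map_smul, LinearMap.smul_apply, inner_smul_right,
    toLpLin_one, LinearMap.id_apply, real_inner_self_eq_norm_sq] at this
  rw [map_sub, LinearMap.sub_apply, inner_sub_right]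
  linarith

theorem Matrix.PosDef.exp_smul_inv_mul_sub {Q : Matrix ι ι ℝ} (hQ : Q.PosDef) {t : ℝ}
    (ht : 0 < t) : (NormedSpace.exp (t • Q⁻¹) * Q - Q).PosDef := by
  have hX : (NormedSpace.exp (t • Q⁻¹)).IsHermitian :=
    (hQ.inv.isHermitian.smul (IsSelfAdjoint.all t)).exp
  have hherm : (NormedSpace.exp (t • Q⁻¹) * Q - Q).IsHermitian := by
    refine IsHermitian.sub ?_ hQ.isHermitian
    rw [IsHermitian, conjTranspose_mul, hX.eq, hQ.isHermitian.eq]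
    exact (((commute_self_nonsing_inv Q).smul_right t).exp_right).eq
  refine PosDef.of_dotProduct_mulVec_pos hherm fun x hx => ?_
  have hx' : 0 < ‖WithLp.toLp 2 x‖ := by simpa using hx
  calc 0 < t * ‖WithLp.toLp 2 x‖ ^ 2 := by positivity
    _ ≤ _ := hQ.mul_norm_sq_le_inner_exp_smul_inv_mul_sub ht.le (WithLp.toLp 2 x)
    _ = star x ⬝ᵥ (NormedSpace.exp (t • Q⁻¹) * Q - Q) *ᵥ x := by
      simp [EuclideanSpace.inner_eq_star_dotProduct, dotProduct_comm, sub_mulVec]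

end Matrix

section GaussianDensity

variable {n : ℕ}

noncomputable def gaussianDensity (S : Matrix (Fin n) (Fin n) ℝ)
    (x : EuclideanSpace ℝ (Fin n)) : ℝ :=
  ((2 * π) ^ (n : ℝ) * S.det) ^ (-(1 / 2 : ℝ)) * Real.exp (-⟪x, toEuclideanLin S⁻¹ x⟫ / 2)

theorem gaussianCov_eq_withDensity (S : Matrix (Fin n) (Fin n) ℝ) :
    gaussianCov S = volume.withDensity fun x => ENNReal.ofReal (gaussianDensity S x) :=
  rfl

@[fun_prop]
theorem continuous_gaussianDensity (S : Matrix (Fin n) (Fin n) ℝ) :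
    Continuous (gaussianDensity S) := by
  have := (toEuclideanLin S⁻¹).continuous_of_finiteDimensional
  unfold gaussianDensity
  fun_prop

theorem gaussianDensity_nonneg {S : Matrix (Fin n) (Fin n) ℝ} (hS : 0 ≤ S.det)
    (x : EuclideanSpace ℝ (Fin n)) : 0 ≤ gaussianDensity S x := by
  unfold gaussianDensity
  positivity

theorem lintegral_gaussianCov_add (S : Matrix (Fin n) (Fin n) ℝ)
    {g : EuclideanSpace ℝ (Fin n) → ℝ≥0∞} (hg : Measurable g) (m : EuclideanSpace ℝ (Fin n)) :
    ∫⁻ y, g (m + y) ∂gaussianCov S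
      = ∫⁻ z, ENNReal.ofReal (gaussianDensity S (z - m)) ∂volume.withDensity g := by
  rw [gaussianCov_eq_withDensity, lintegral_withDensity_eq_lintegral_mul _ (by fun_prop)
    (by fun_prop), lintegral_withDensity_eq_lintegral_mul _ hg (by fun_prop)]
  conv_rhs => rw [← lintegral_add_right_eq_self _ m]
  simp only [Pi.mul_apply, add_sub_cancel_right, add_comm m, mul_comm]

theorem gaussianDensity_convexComb_le {S : Matrix (Fin n) (Fin n) ℝ} (hS : 0 ≤ S.det)
    {s : ℝ} (hs0 : 0 ≤ s) (hs1 : s ≤ 1) {a b : EuclideanSpace ℝ (Fin n)} {C : ℝ}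
    (hC : ⟪a - b, toEuclideanLin S⁻¹ (a - b)⟫ ≤ C) :
    gaussianDensity S ((1 - s) • a + s • b)
      ≤ Real.exp (s * (1 - s) * C / 2) * gaussianDensity S a ^ (1 - s)
        * gaussianDensity S b ^ s := by
  set c := ((2 * π) ^ (n : ℝ) * S.det) ^ (-(1 / 2 : ℝ))
  have hc : 0 ≤ c := by positivity
  have hcc : c ^ (1 - s) * c ^ s = c := by
    rw [← Real.rpow_add' hc (by norm_num), sub_add_cancel, Real.rpow_one]
  have hss : 0 ≤ s * (1 - s) := mul_nonneg hs0 (by linarith)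
  simp only [gaussianDensity, real_inner_convexComb_map_self]
  rw [Real.mul_rpow hc (Real.exp_pos _).le, Real.mul_rpow hc (Real.exp_pos _).le,
    ← Real.exp_mul, ← Real.exp_mul]
  calc c * Real.exp (-((1 - s) * ⟪a, toEuclideanLin S⁻¹ a⟫ + s * ⟪b, toEuclideanLin S⁻¹ b⟫
          - s * (1 - s) * ⟪a - b, toEuclideanLin S⁻¹ (a - b)⟫) / 2)
      ≤ c * Real.exp (s * (1 - s) * C / 2 + (-⟪a, toEuclideanLin S⁻¹ a⟫ / 2 * (1 - s)
          + -⟪b, toEuclideanLin S⁻¹ b⟫ / 2 * s)) := by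
        gcongr
        nlinarith [mul_le_mul_of_nonneg_left hC hss]
    _ = _ := by
        conv_lhs => rw [← hcc]
        rw [Real.exp_add, Real.exp_add]
        ring

end GaussianDensity

section OrnsteinUhlenbeck

variable {ι : Type*} [Fintype ι] [DecidableEq ι]

noncomputable def ouDrift (Q : Matrix ι ι ℝ) (t : ℝ) : Matrix ι ι ℝ :=
  NormedSpace.exp (t • (-(2 : ℝ)⁻¹ • Q⁻¹))

noncomputable def ouCov (Q : Matrix ι ι ℝ) (t : ℝ) : Matrix ι ι ℝ :=
  Q * (1 - NormedSpace.exp ((2 * t) • (-(2 : ℝ)⁻¹ • Q⁻¹)))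

theorem ouDrift_isHermitian {Q : Matrix ι ι ℝ} (hQ : Q.IsHermitian) (t : ℝ) :
    (ouDrift Q t).IsHermitian :=
  ((hQ.inv.smul (IsSelfAdjoint.all _)).smul (IsSelfAdjoint.all t)).exp

theorem ouCov_eq_ouDrift_mul_mul (Q : Matrix ι ι ℝ) (t : ℝ) :
    ouCov Q t = ouDrift Q t * (NormedSpace.exp (t • Q⁻¹) * Q - Q) * ouDrift Q t := by
  set P := ouDrift Q t
  set X := NormedSpace.exp (t • Q⁻¹)
  have hP : P = NormedSpace.exp ((-(t / 2)) • Q⁻¹) := by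
    simp only [P, ouDrift, smul_smul]; congr 2; ring
  have hPXP : P * X * P = 1 := by
    rw [hP, exp_smul_mul_exp_smul, exp_smul_mul_exp_smul,
      show -(t / 2) + t + -(t / 2) = 0 by ring, zero_smul, NormedSpace.exp_zero]
  have hPP : P * P = NormedSpace.exp ((2 * t) • (-(2 : ℝ)⁻¹ • Q⁻¹)) := by
    rw [hP, exp_smul_mul_exp_smul, smul_smul]; congr 2; ring
  have hQP : Q * P = P * Q := by
    rw [hP]; exact (((commute_self_nonsing_inv Q).smul_right _).exp_right).eq
  calc ouCov Q t = Q - (P * P) * Q := by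
        rw [ouCov, ← hPP, mul_sub, mul_one, ← mul_assoc, hQP, mul_assoc, hQP, mul_assoc]
    _ = (P * X * P) * Q - (P * P) * Q := by rw [hPXP, one_mul]
    _ = P * (X * Q - Q) * P := by
        simp only [mul_sub, sub_mul, mul_assoc, hQP]

theorem ouCov_posDef {Q : Matrix ι ι ℝ} (hQ : Q.PosDef) {t : ℝ} (ht : 0 < t) :
    (ouCov Q t).PosDef := by
  have hP : IsUnit (ouDrift Q t) := isUnit_exp _
  have h := hP.posDef_star_left_conjugate_iff.mpr (hQ.exp_smul_inv_mul_sub ht)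
  rwa [star_eq_conjTranspose, (ouDrift_isHermitian hQ.isHermitian t).eq,
    ← ouCov_eq_ouDrift_mul_mul] at h

theorem inner_ouDrift_ouCov_inv_ouDrift_le {Q : Matrix ι ι ℝ} (hQ : Q.PosDef) {t : ℝ}
    (ht : 0 < t) (v : EuclideanSpace ℝ ι) :
    ⟪toEuclideanLin (ouDrift Q t) v,
      toEuclideanLin (ouCov Q t)⁻¹ (toEuclideanLin (ouDrift Q t) v)⟫ ≤ ‖v‖ ^ 2 / t := by
  have hP : IsUnit (ouDrift Q t).det := (isUnit_iff_isUnit_det _).mp (isUnit_exp _)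
  have hPQP : ouDrift Q t * (ouCov Q t)⁻¹ * ouDrift Q t
      = (NormedSpace.exp (t • Q⁻¹) * Q - Q)⁻¹ := by
    rw [ouCov_eq_ouDrift_mul_mul, Matrix.mul_inv_rev, Matrix.mul_inv_rev]
    simp only [mul_assoc, nonsing_inv_mul _ hP, mul_one, mul_nonsing_inv_cancel_left _ _ hP]
  set P := ouDrift Q t
  set M := NormedSpace.exp (t • Q⁻¹) * Q - Q
  have hM : IsUnit M.det := (hQ.exp_smul_inv_mul_sub ht).det_pos.ne'.isUnit
  set w := toEuclideanLin M⁻¹ v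
  have hw : toEuclideanLin M w = v := by
    rw [← LinearMap.comp_apply, ← toLpLin_mul_same, mul_nonsing_inv M hM, toLpLin_one,
      LinearMap.id_apply]
  calc ⟪toEuclideanLin P v, toEuclideanLin (ouCov Q t)⁻¹ (toEuclideanLin P v)⟫
      = ⟪v, w⟫ := by
        rw [(isSymmetric_toEuclideanLin_iff.mpr (ouDrift_isHermitian hQ.isHermitian t)),
          ← LinearMap.comp_apply, ← LinearMap.comp_apply, ← toLpLin_mul_same,
          ← toLpLin_mul_same, hPQP]
    _ = ⟪w, toEuclideanLin M w⟫ := by rw [hw, real_inner_comm]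
    _ ≤ ‖toEuclideanLin M w‖ ^ 2 / t := real_inner_le_norm_sq_div_of_mul_norm_sq_le ht
        (hQ.mul_norm_sq_le_inner_exp_smul_inv_mul_sub ht.le w)
    _ = ‖v‖ ^ 2 / t := by rw [hw]

end OrnsteinUhlenbeck

theorem ouSemigroup_apply {n : ℕ} (Q : Matrix (Fin n) (Fin n) ℝ) (t : ℝ)
    (g : EuclideanSpace ℝ (Fin n) → ℝ≥0∞) (x : EuclideanSpace ℝ (Fin n)) :
    ouSemigroup Q t g x
      = ∫⁻ y, g (toEuclideanLin (ouDrift Q t) x + y) ∂gaussianCov (ouCov Q t) :=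
  rfl

theorem gaussianDensity_ouCov_sub_le {n : ℕ} {Q : Matrix (Fin n) (Fin n) ℝ} (hQ : Q.PosDef)
    {t : ℝ} (ht : 0 < t) {s : ℝ} (hs0 : 0 ≤ s) (hs1 : s ≤ 1)
    (z x₀ x₁ : EuclideanSpace ℝ (Fin n)) :
    gaussianDensity (ouCov Q t) (z - toEuclideanLin (ouDrift Q t) ((1 - s) • x₀ + s • x₁))
      ≤ Real.exp (s * (1 - s) * ‖x₁ - x₀‖ ^ 2 / (2 * t))
        * gaussianDensity (ouCov Q t) (z - toEuclideanLin (ouDrift Q t) x₀) ^ (1 - s)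
        * gaussianDensity (ouCov Q t) (z - toEuclideanLin (ouDrift Q t) x₁) ^ s := by
  set P := toEuclideanLin (ouDrift Q t)
  have hmid : z - P ((1 - s) • x₀ + s • x₁) = (1 - s) • (z - P x₀) + s • (z - P x₁) := by
    rw [map_add, map_smul, map_smul]; module
  have hdiff : (z - P x₀) - (z - P x₁) = P (x₁ - x₀) := by
    rw [map_sub]; abel
  have h := gaussianDensity_convexComb_le (ouCov_posDef hQ ht).det_pos.le hs0 hs1
    (hdiff ▸ inner_ouDrift_ouCov_inv_ouDrift_le hQ ht (x₁ - x₀))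
  rw [hmid]
  convert h using 4
  ring

/-- Lemma 3.2 of the paper (log-convexity of `P_t`) in the finite-dimensional Gaussian setting:
for `Q` symmetric positive-definite, every Borel `g : ℝⁿ → [0,∞]`, `t > 0`, `x₀, x₁ ∈ ℝⁿ` and
`s ∈ [0,1]`,
`P_t g((1−s)x₀ + s x₁) ≤ exp(s(1−s)|x₁ − x₀|²/(2t)) (P_t g(x₀))^{1−s} (P_t g(x₁))^s`. -/
theorem stmt_8 (n : ℕ) (Q : Matrix (Fin n) (Fin n) ℝ) (hQ : Q.PosDef)
    (g : EuclideanSpace ℝ (Fin n) → ℝ≥0∞) (hg : Measurable g)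
    (t : ℝ) (ht : 0 < t) (x₀ x₁ : EuclideanSpace ℝ (Fin n)) (s : ℝ) (hs : s ∈ Set.Icc 0 1) :
    ouSemigroup Q t g ((1 - s) • x₀ + s • x₁)
      ≤ ENNReal.ofReal (Real.exp (s * (1 - s) * ‖x₁ - x₀‖ ^ 2 / (2 * t)))
        * (ouSemigroup Q t g x₀) ^ (1 - s) * (ouSemigroup Q t g x₁) ^ s := by
  obtain ⟨hs0, hs1⟩ := hs
  have hdet := (ouCov_posDef hQ ht).det_pos.le
  simp only [ouSemigroup_apply, lintegral_gaussianCov_add _ hg]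
  refine lintegral_le_mul_rpow_mul_rpow (by fun_prop) (by fun_prop) hs0 hs1
    (ae_of_all _ fun z => ?_)
  rw [ofReal_rpow_of_nonneg (gaussianDensity_nonneg hdet _) (by linarith),
    ofReal_rpow_of_nonneg (gaussianDensity_nonneg hdet _) hs0,
    ← ofReal_mul (Real.exp_pos _).le,
    ← ofReal_mul (mul_nonneg (Real.exp_pos _).le (rpow_nonneg (gaussianDensity_nonneg hdet _) _))]
  exact ofReal_le_ofReal (gaussianDensity_ouCov_sub_le hQ ht hs0 hs1 z x₀ x₁)
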